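/- arXiv:1511.01858 — 4 statements merged into one kernel-verified Lean document; each statement's English description precedes it below -/
import Mathlib

section
/- Let Ω ⊂ ℂ^n be a bounded open set with nonempty boundary and let ρ : ℂ^n → ℝ be an L-Lipschitz function with ρ(ξ) = 0 for every ξ ∈ ∂Ω. Define ρ̃(z) := sup_{ξ ∈ ∂Ω} (ρ(z) − ‖z − ξ‖²). Then for every z in the closure of Ω one has −ρ̃(z) ≤ (L + diam(cl Ω)) · dist(z, ∂Ω), where dist(z, ∂Ω) denotes the Euclidean distance from z to the boundary of Ω. -/
open Metric

/-
Fix `z` and let `ξ ∈ ∂Ω` realise `dist(z, ∂Ω)`. Since `ρ ξ = 0`, the Lipschitz bound gives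
`-ρ z ≤ L |z - ξ|`, and `|z - ξ|² ≤ diam(cl Ω) |z - ξ|`; the single term of the supremum at `ξ`
therefore already satisfies `-(ρ z - |z - ξ|²) ≤ (L + diam(cl Ω)) |z - ξ|`.
-/

lemma LipschitzWith.neg_le_mul_dist_of_eq_zero {E : Type*} [PseudoMetricSpace E] {L : NNReal}
    {ρ : E → ℝ} (hρ : LipschitzWith L ρ) {ξ : E} (hξ : ρ ξ = 0) (z : E) :
    -ρ z ≤ L * dist z ξ := by
  have h := hρ.dist_le_mul z ξ
  rw [Real.dist_eq, hξ, sub_zero] at h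
  exact (neg_le_abs _).trans h

lemma bddAbove_image_sub_sq {α : Type*} (c : ℝ) (g : α → ℝ) (s : Set α) :
    BddAbove ((fun ξ => c - g ξ ^ 2) '' s) :=
  ⟨c, by rintro _ ⟨ξ, -, rfl⟩; nlinarith [sq_nonneg (g ξ)]⟩

theorem neg_sSup_sub_sq_le_mul_infDist {E : Type*} [NormedAddCommGroup E] [ProperSpace E]
    {s : Set E} (hs : IsClosed s) (hne : s.Nonempty) {L : NNReal} {ρ : E → ℝ}
    (hρ : LipschitzWith L ρ) (hρ0 : ∀ ξ ∈ s, ρ ξ = 0) {z : E} {D : ℝ}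
    (hD : ∀ ξ ∈ s, dist z ξ ≤ D) :
    -sSup ((fun ξ => ρ z - ‖z - ξ‖ ^ 2) '' s) ≤ (L + D) * infDist z s := by
  obtain ⟨ξ, hξ, hinf⟩ := hs.exists_infDist_eq_dist hne z
  have hterm : ρ z - dist z ξ ^ 2 ≤ sSup ((fun ξ => ρ z - ‖z - ξ‖ ^ 2) '' s) := by
    rw [dist_eq_norm]
    exact le_csSup (bddAbove_image_sub_sq _ _ _) ⟨ξ, hξ, rfl⟩
  have hlip := hρ.neg_le_mul_dist_of_eq_zero (hρ0 ξ hξ) z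
  have hsq : dist z ξ ^ 2 ≤ D * dist z ξ := by
    rw [sq]; exact mul_le_mul_of_nonneg_right (hD ξ hξ) dist_nonneg
  rw [hinf]
  linarith

theorem stmt_2_general (n : ℕ) (Ω : Set (EuclideanSpace ℂ (Fin n)))
    (hΩbdd : Bornology.IsBounded Ω)
    (hfr : (frontier Ω).Nonempty)
    (L : NNReal) (ρ : EuclideanSpace ℂ (Fin n) → ℝ) (hρ : LipschitzWith L ρ)
    (hρ0 : ∀ ξ ∈ frontier Ω, ρ ξ = 0)
    (ρt : EuclideanSpace ℂ (Fin n) → ℝ)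
    (hρt : ∀ z, ρt z = sSup ((fun ξ => ρ z - ‖z - ξ‖ ^ 2) '' frontier Ω)) :
    ∀ z ∈ closure Ω,
      -ρt z ≤ ((L : ℝ) + Metric.diam (closure Ω)) * Metric.infDist z (frontier Ω) := by
  intro z hz
  rw [hρt]
  exact neg_sSup_sub_sq_le_mul_infDist isClosed_frontier hfr hρ hρ0 fun ξ hξ =>
    dist_le_diam_of_mem hΩbdd.closure hz (frontier_subset_closure hξ)

/-- Let `Ω ⊂ ℂⁿ` be a bounded open set with nonempty boundary and let
`ρ : ℂⁿ → ℝ` be `L`-Lipschitz with `ρ = 0` on `∂Ω`.  Define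
`ρ̃ z := sup_{ξ ∈ ∂Ω} (ρ z − ‖z − ξ‖²)`.  Then for every `z ∈ closure Ω` one has
`−ρ̃ z ≤ (L + diam (closure Ω)) · dist(z, ∂Ω)`. -/
theorem stmt_2 (n : ℕ) (Ω : Set (EuclideanSpace ℂ (Fin n)))
    (hΩopen : IsOpen Ω) (hΩbdd : Bornology.IsBounded Ω)
    (hfr : (frontier Ω).Nonempty)
    (L : NNReal) (ρ : EuclideanSpace ℂ (Fin n) → ℝ) (hρ : LipschitzWith L ρ)
    (hρ0 : ∀ ξ ∈ frontier Ω, ρ ξ = 0)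
    (ρt : EuclideanSpace ℂ (Fin n) → ℝ)
    (hρt : ∀ z, ρt z = sSup ((fun ξ => ρ z - ‖z - ξ‖ ^ 2) '' frontier Ω)) :
    ∀ z ∈ closure Ω,
      -ρt z ≤ ((L : ℝ) + Metric.diam (closure Ω)) * Metric.infDist z (frontier Ω) :=
  stmt_2_general n Ω hΩbdd hfr L ρ hρ hρ0 ρt hρt
end

section
/- Let Ω ⊂ ℂ^n be a nonempty bounded open set and let u, v, w : cl(Ω) → ℝ satisfy v ≤ u ≤ w on cl(Ω) and v = w on ∂Ω, with u continuous on cl(Ω), v ν-Hölder continuous with constant C_v (0 < ν ≤ 1) and w β-Hölder continuous with constant C_w (0 < β ≤ 1). Fix 0 < δ₁ ≤ δ and let z ∈ Ω with dist(z, ∂Ω) = δ. Define the ball average û_{δ₁}(z) := (1/(τ_{2n} δ₁^{2n})) ∫_{‖ζ−z‖ ≤ δ₁} u(ζ) dV_{2n}(ζ), where τ_{2n} is the Lebesgue volume of the unit ball in ℂ^n and dV_{2n} is Lebesgue measure. Then û_{δ₁}(z) − u(z) ≤ C_w (2δ)^β + C_v δ^ν. -/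
open MeasureTheory

/-- The Borel σ-algebra on `ℂⁿ` (with its Euclidean norm). -/
noncomputable instance (n : ℕ) : MeasurableSpace (EuclideanSpace ℂ (Fin n)) :=
  MeasurableSpace.comap WithLp.ofLp MeasurableSpace.pi

instance (n : ℕ) : BorelSpace (EuclideanSpace ℂ (Fin n)) := PiLp.borelSpace 2

/-- Lebesgue measure `dV_{2n}` on `ℂⁿ`. -/
noncomputable instance (n : ℕ) : MeasureSpace (EuclideanSpace ℂ (Fin n)) :=
  ⟨Measure.map (WithLp.toLp 2 : (Fin n → ℂ) → EuclideanSpace ℂ (Fin n))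
    (inferInstance : MeasureSpace (Fin n → ℂ)).volume⟩

/-!
Let `ξ ∈ ∂Ω` be a boundary point nearest to `z`, so `‖ξ - z‖ = δ`. Every `ζ` with
`‖ζ - z‖ ≤ δ₁ ≤ δ` lies in `cl(Ω)` and satisfies `‖ζ - ξ‖ ≤ 2δ`, hence
`u ζ ≤ w ζ ≤ w ξ + Cw (2δ)^β = v ξ + Cw (2δ)^β ≤ v z + Cv δ^ν + Cw (2δ)^β`,
and `v z ≤ u z`.
A ball average is at most the supremum of the function on the ball.
-/

open Metric Set

instance isAddHaarMeasure_volume_euclideanSpace_complex (n : ℕ) :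
    (volume : Measure (EuclideanSpace ℂ (Fin n))).IsAddHaarMeasure :=
  (PiLp.continuousLinearEquiv 2 ℝ (fun _ : Fin n => ℂ)).symm.isAddHaarMeasure_map volume

theorem finrank_real_euclideanSpace_complex (ι : Type*) [Fintype ι] :
    Module.finrank ℝ (EuclideanSpace ℂ ι) = 2 * Fintype.card ι := by
  rw [← Module.finrank_mul_finrank ℝ ℂ, finrank_euclideanSpace, Complex.finrank_real_complex]

theorem volume_real_closedBall_euclideanSpace_complex (n : ℕ) (z : EuclideanSpace ℂ (Fin n))
    {r : ℝ} (hr : 0 ≤ r) :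
    volume.real (closedBall z r) =
      volume.real (ball (0 : EuclideanSpace ℂ (Fin n)) 1) * r ^ (2 * n) := by
  rw [Measure.addHaar_real_closedBall volume z hr, finrank_real_euclideanSpace_complex,
    Fintype.card_fin, mul_comm]

theorem exists_mem_frontier_dist_eq_infDist_of_pos {α : Type*} [MetricSpace α] [ProperSpace α]
    {x : α} {s : Set α} (h : 0 < infDist x (frontier s)) :
    ∃ ξ ∈ frontier s, dist x ξ = infDist x (frontier s) := by
  have hne : (frontier s).Nonempty := nonempty_iff_ne_empty.2 fun he => by simp [he] at h
  obtain ⟨ξ, hξ, hxξ⟩ := isClosed_frontier.exists_infDist_eq_dist hne x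
  exact ⟨ξ, hξ, hxξ.symm⟩

section Frontier

variable {E : Type*} [NormedAddCommGroup E] [NormedSpace ℝ E] [FiniteDimensional ℝ E]

theorem infDist_frontier_le_infDist_compl {x : E} {s : Set E} (hx : x ∈ s) (hs : s ≠ univ) :
    infDist x (frontier s) ≤ infDist x sᶜ := by
  obtain ⟨y, hy, hxy⟩ := exists_mem_frontier_infDist_compl_eq_dist hx hs
  exact hxy ▸ infDist_le_dist_of_mem hy

theorem closedBall_subset_closure_of_le_infDist_frontier {x : E} {s : Set E} {r : ℝ}
    (hx : x ∈ s) (hr : 0 < r) (hrs : r ≤ infDist x (frontier s)) :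
    closedBall x r ⊆ closure s := by
  have hs : s ≠ univ := by
    rintro rfl
    simp only [frontier_univ, infDist_empty] at hrs
    linarith
  calc closedBall x r ⊆ closedBall x (infDist x sᶜ) :=
        closedBall_subset_closedBall (hrs.trans (infDist_frontier_le_infDist_compl hx hs))
    _ ⊆ closure s := closedBall_infDist_compl_subset_closure hx

end Frontier

theorem setIntegral_le_measureReal_mul {α : Type*} [MeasurableSpace α] {μ : Measure α}
    {s : Set α} {f : α → ℝ} {M : ℝ} (hs : MeasurableSet s) (hμs : μ s < ⊤)
    (hf : IntegrableOn f s μ) (hfM : ∀ x ∈ s, f x ≤ M) :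
    ∫ x in s, f x ∂μ ≤ μ.real s * M :=
  calc ∫ x in s, f x ∂μ ≤ ∫ _ in s, M ∂μ :=
        setIntegral_mono_on hf (integrableOn_const hμs.ne) hs hfM
    _ = μ.real s * M := by rw [setIntegral_const, smul_eq_mul]

theorem nonneg_of_abs_sub_le_mul_rpow {E : Type*} [NormedAddCommGroup E] {f : E → ℝ}
    {C β : ℝ} {x y : E} (hxy : x ≠ y) (h : |f x - f y| ≤ C * ‖x - y‖ ^ β) : 0 ≤ C :=
  nonneg_of_mul_nonneg_left ((abs_nonneg _).trans h)
    (Real.rpow_pos_of_pos (norm_pos_iff.2 (sub_ne_zero.2 hxy)) β)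

theorem le_add_of_squeeze_of_holder {E : Type*} [NormedAddCommGroup E] {K : Set E}
    {u v w : E → ℝ} {ν Cv β Cw : ℝ}
    (hvu : ∀ x ∈ K, v x ≤ u x) (huw : ∀ x ∈ K, u x ≤ w x)
    (hvH : ∀ x ∈ K, ∀ y ∈ K, |v x - v y| ≤ Cv * ‖x - y‖ ^ ν)
    (hwH : ∀ x ∈ K, ∀ y ∈ K, |w x - w y| ≤ Cw * ‖x - y‖ ^ β)
    {ζ ξ z : E} (hζ : ζ ∈ K) (hξ : ξ ∈ K) (hz : z ∈ K) (hvwξ : v ξ = w ξ) :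
    u ζ ≤ u z + Cw * ‖ζ - ξ‖ ^ β + Cv * ‖ξ - z‖ ^ ν := by
  have hw := (abs_le.1 (hwH ζ hζ ξ hξ)).2
  have hv := (abs_le.1 (hvH ξ hξ z hz)).2
  linarith [huw ζ hζ, hvu z hz]

theorem stmt_5_general (n : ℕ) (Ω : Set (EuclideanSpace ℂ (Fin n)))
    (u v w : EuclideanSpace ℂ (Fin n) → ℝ)
    (hvu : ∀ x ∈ closure Ω, v x ≤ u x) (huw : ∀ x ∈ closure Ω, u x ≤ w x)
    (hvw : ∀ x ∈ frontier Ω, v x = w x)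
    (hu : ContinuousOn u (closure Ω))
    (ν Cv β Cw : ℝ) (hβ0 : 0 < β)
    (hvH : ∀ x ∈ closure Ω, ∀ y ∈ closure Ω, |v x - v y| ≤ Cv * ‖x - y‖ ^ ν)
    (hwH : ∀ x ∈ closure Ω, ∀ y ∈ closure Ω, |w x - w y| ≤ Cw * ‖x - y‖ ^ β)
    (δ δ₁ : ℝ) (hδ₁0 : 0 < δ₁) (hδ₁δ : δ₁ ≤ δ)
    (z : EuclideanSpace ℂ (Fin n)) (hz : z ∈ Ω)
    (hzδ : Metric.infDist z (frontier Ω) = δ)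
    (τ : ℝ) (hτ : τ = (volume (Metric.ball (0 : EuclideanSpace ℂ (Fin n)) 1)).toReal) :
    (1 / (τ * δ₁ ^ (2 * n))) * (∫ ζ in Metric.closedBall z δ₁, u ζ) - u z ≤
      Cw * (2 * δ) ^ β + Cv * δ ^ ν := by
  have hδ : 0 < δ := hδ₁0.trans_le hδ₁δ
  have hzΩ : z ∈ closure Ω := subset_closure hz
  have hball : closedBall z δ₁ ⊆ closure Ω :=
    closedBall_subset_closure_of_le_infDist_frontier hz hδ₁0 (hzδ ▸ hδ₁δ)
  obtain ⟨ξ, hξ, hzξ⟩ := exists_mem_frontier_dist_eq_infDist_of_pos (hzδ ▸ hδ)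
  have hξz : ‖ξ - z‖ = δ := by rw [← dist_eq_norm, dist_comm, hzξ, hzδ]
  have hξΩ : ξ ∈ closure Ω := frontier_subset_closure hξ
  have hCw : 0 ≤ Cw := nonneg_of_abs_sub_le_mul_rpow
    (fun h => hδ.ne' (by rw [← hξz, h, sub_self, norm_zero])) (hwH ξ hξΩ z hzΩ)
  have hbound : ∀ ζ ∈ closedBall z δ₁, u ζ ≤ u z + (Cw * (2 * δ) ^ β + Cv * δ ^ ν) := by
    intro ζ hζ
    have hζξ : ‖ζ - ξ‖ ≤ 2 * δ := by
      rw [mem_closedBall, dist_eq_norm] at hζ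
      linarith [norm_sub_le_norm_sub_add_norm_sub ζ z ξ, norm_sub_rev z ξ]
    have hζ' := le_add_of_squeeze_of_holder hvu huw hvH hwH (hball hζ) hξΩ hzΩ (hvw ξ hξ)
    rw [hξz] at hζ'
    have := mul_le_mul_of_nonneg_left (Real.rpow_le_rpow (norm_nonneg _) hζξ hβ0.le) hCw
    linarith
  have hvol : volume.real (closedBall z δ₁) = τ * δ₁ ^ (2 * n) := by
    rw [volume_real_closedBall_euclideanSpace_complex n z hδ₁0.le, hτ, measureReal_def]
  have hτ0 : 0 < τ := hτ ▸ ENNReal.toReal_pos (measure_ball_pos volume 0 one_pos).ne'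
    measure_ball_lt_top.ne
  have hintegral := setIntegral_le_measureReal_mul (μ := volume) measurableSet_closedBall
    measure_closedBall_lt_top
    ((hu.mono hball).integrableOn_compact (isCompact_closedBall z δ₁)) hbound
  rw [hvol, ← inv_mul_le_iff₀ (by positivity), ← one_div] at hintegral
  linarith

/-- Let `Ω ⊂ ℂⁿ` be a nonempty bounded open set and `u, v, w` with
`v ≤ u ≤ w` on `closure Ω`, `v = w` on `∂Ω`, `u` continuous on `closure Ω`, `v`
`ν`-Hölder with constant `Cv`, `w` `β`-Hölder with constant `Cw`.  Fix `0 < δ₁ ≤ δ` and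
`z ∈ Ω` with `dist(z,∂Ω) = δ`.  Then the ball average
`û_{δ₁}(z) = (1/(τ_{2n} δ₁^{2n})) ∫_{‖ζ−z‖ ≤ δ₁} u dV_{2n}` satisfies
`û_{δ₁}(z) − u(z) ≤ Cw (2δ)^β + Cv δ^ν`. -/
theorem stmt_5 (n : ℕ) (Ω : Set (EuclideanSpace ℂ (Fin n)))
    (hΩopen : IsOpen Ω) (hΩbdd : Bornology.IsBounded Ω) (hΩne : Ω.Nonempty)
    (u v w : EuclideanSpace ℂ (Fin n) → ℝ)
    (hvu : ∀ x ∈ closure Ω, v x ≤ u x) (huw : ∀ x ∈ closure Ω, u x ≤ w x)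
    (hvw : ∀ x ∈ frontier Ω, v x = w x)
    (hu : ContinuousOn u (closure Ω))
    (ν Cv β Cw : ℝ) (hν0 : 0 < ν) (hν1 : ν ≤ 1) (hβ0 : 0 < β) (hβ1 : β ≤ 1)
    (hvH : ∀ x ∈ closure Ω, ∀ y ∈ closure Ω, |v x - v y| ≤ Cv * ‖x - y‖ ^ ν)
    (hwH : ∀ x ∈ closure Ω, ∀ y ∈ closure Ω, |w x - w y| ≤ Cw * ‖x - y‖ ^ β)
    (δ δ₁ : ℝ) (hδ₁0 : 0 < δ₁) (hδ₁δ : δ₁ ≤ δ)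
    (z : EuclideanSpace ℂ (Fin n)) (hz : z ∈ Ω)
    (hzδ : Metric.infDist z (frontier Ω) = δ)
    (τ : ℝ) (hτ : τ = (volume (Metric.ball (0 : EuclideanSpace ℂ (Fin n)) 1)).toReal) :
    (1 / (τ * δ₁ ^ (2 * n))) * (∫ ζ in Metric.closedBall z δ₁, u ζ) - u z ≤
      Cw * (2 * δ) ^ β + Cv * δ ^ ν :=
  stmt_5_general n Ω u v w hvu huw hvw hu ν Cv β Cw hβ0 hvH hwH δ δ₁ hδ₁0 hδ₁δ z hz hzδ τ hτ
end

section
/- Let Ω ⊂ ℂ^n be a nonempty bounded open set and let u : cl(Ω) → ℝ be a bounded function. Let c > 0, 0 < δ₀ < 1 and 0 < α' ≤ 1, and suppose that for every 0 < δ < δ₀: (i) |u(z₁) − u(z₂)| ≤ c δ^{α'} whenever z₁, z₂ ∈ cl(Ω) satisfy dist(z₁, ∂Ω) ≤ δ, dist(z₂, ∂Ω) ≤ δ and ‖z₁ − z₂‖ ≤ δ; and (ii) u(z + ζ) − u(z) ≤ c δ^{α'} whenever z ∈ Ω with dist(z, ∂Ω) > δ, ‖ζ‖ ≤ δ and z +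 ζ ∈ cl(Ω). Then u is α'-Hölder continuous on cl(Ω): there exists a constant C > 0, depending only on c, δ₀, α', diam(Ω) and sup_{cl(Ω)} |u|, such that |u(z) − u(w)| ≤ C ‖z − w‖^{α'} for all z, w ∈ cl(Ω). -/
/-!
Fix `z, w ∈ closure Ω` at distance `δ = ‖z - w‖`. If `2δ ≥ δ₀`, the bound `|u| ≤ M` alone gives
`|u z - u w| ≤ 2M ≤ 2M (δ₀/2)^{-α'} δ^{α'}`. If `2δ < δ₀` and one of the points lies within `δ`
of `∂Ω`, both lie within `2δ` of it and the boundary estimate (i) at scale `2δ` applies. Otherwise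
both points lie in `Ω` at distance more than `δ` from `∂Ω`, and the one-sided interior estimate
(ii), applied from `z` towards `w` and from `w` towards `z`, bounds `u z - u w` on both sides.
-/

open Metric

namespace HolderGluing

variable {E : Type*} [NormedAddCommGroup E]

def BoundaryOscillationBound (Ω : Set E) (u : E → ℝ) (c δ₀ α : ℝ) : Prop :=
  ∀ δ : ℝ, 0 < δ → δ < δ₀ → ∀ z₁ ∈ closure Ω, ∀ z₂ ∈ closure Ω,
    infDist z₁ (frontier Ω) ≤ δ → infDist z₂ (frontier Ω) ≤ δ →
    ‖z₁ - z₂‖ ≤ δ → |u z₁ - u z₂| ≤ c * δ ^ α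

def InteriorIncrementBound (Ω : Set E) (u : E → ℝ) (c δ₀ α : ℝ) : Prop :=
  ∀ δ : ℝ, 0 < δ → δ < δ₀ → ∀ z ∈ Ω, δ < infDist z (frontier Ω) →
    ∀ ζ : E, ‖ζ‖ ≤ δ → z + ζ ∈ closure Ω → u (z + ζ) - u z ≤ c * δ ^ α

lemma _root_.Real.rpow_two_mul_le {x α : ℝ} (hx : 0 ≤ x) (hα : α ≤ 1) :
    (2 * x) ^ α ≤ 2 * x ^ α := by
  rw [Real.mul_rpow zero_le_two hx]
  gcongr
  simpa using Real.rpow_le_rpow_of_exponent_le one_le_two hα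

lemma _root_.IsOpen.mem_of_mem_closure_of_infDist_frontier_pos {X : Type*} [MetricSpace X]
    {s : Set X} {x : X} (hs : IsOpen s) (hx : x ∈ closure s)
    (hd : 0 < infDist x (frontier s)) : x ∈ s := by
  by_contra hxs
  have hxF : x ∈ frontier s := by
    rw [frontier, hs.interior_eq]
    exact ⟨hx, hxs⟩
  exact hd.ne' (infDist_zero_of_mem hxF)

lemma abs_sub_le_of_abs_le_of_le_norm_sub {u : E → ℝ} {M r α : ℝ} {z w : E}
    (hz : |u z| ≤ M) (hw : |u w| ≤ M) (hr : 0 < r) (hα : 0 ≤ α) (hrzw : r ≤ ‖z - w‖) :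
    |u z - u w| ≤ 2 * M / r ^ α * ‖z - w‖ ^ α := by
  have hrα : 0 < r ^ α := Real.rpow_pos_of_pos hr α
  have hM : 0 ≤ M := (abs_nonneg _).trans hz
  calc |u z - u w| ≤ 2 * M := by linarith [abs_sub (u z) (u w)]
    _ = 2 * M / r ^ α * r ^ α := (div_mul_cancel₀ _ hrα.ne').symm
    _ ≤ 2 * M / r ^ α * ‖z - w‖ ^ α := by gcongr

variable {Ω : Set E} {u : E → ℝ} {c δ₀ α : ℝ}

lemma BoundaryOscillationBound.abs_sub_le_of_infDist_le
    (h : BoundaryOscillationBound Ω u c δ₀ α) (hc : 0 ≤ c) (hα : α ≤ 1)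
    {z w : E} (hz : z ∈ closure Ω) (hw : w ∈ closure Ω)
    (hpos : 0 < ‖z - w‖) (hsmall : 2 * ‖z - w‖ < δ₀)
    (hzF : infDist z (frontier Ω) ≤ ‖z - w‖) :
    |u z - u w| ≤ 2 * c * ‖z - w‖ ^ α := by
  have hwF : infDist w (frontier Ω) ≤ 2 * ‖z - w‖ := by
    have := infDist_le_infDist_add_dist (x := w) (y := z) (s := frontier Ω)
    rw [dist_eq_norm, norm_sub_rev] at this
    linarith
  calc |u z - u w| ≤ c * (2 * ‖z - w‖) ^ α :=
        h _ (by positivity) hsmall z hz w hw (by linarith) hwF (by linarith)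
    _ ≤ c * (2 * ‖z - w‖ ^ α) := by gcongr; exact Real.rpow_two_mul_le hpos.le hα
    _ = 2 * c * ‖z - w‖ ^ α := by ring

lemma InteriorIncrementBound.abs_sub_le (h : InteriorIncrementBound Ω u c δ₀ α)
    (hΩ : IsOpen Ω) {z w : E} (hz : z ∈ closure Ω) (hw : w ∈ closure Ω)
    (hpos : 0 < ‖z - w‖) (hsmall : ‖z - w‖ < δ₀)
    (hzF : ‖z - w‖ < infDist z (frontier Ω)) (hwF : ‖z - w‖ < infDist w (frontier Ω)) :
    |u z - u w| ≤ c * ‖z - w‖ ^ α := by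
  have hzΩ := hΩ.mem_of_mem_closure_of_infDist_frontier_pos hz (hpos.trans hzF)
  have hwΩ := hΩ.mem_of_mem_closure_of_infDist_frontier_pos hw (hpos.trans hwF)
  have hwz : u w - u z ≤ c * ‖z - w‖ ^ α := by
    simpa using h _ hpos hsmall z hzΩ hzF (w - z) (norm_sub_rev w z).le (by simpa using hw)
  have hzw : u z - u w ≤ c * ‖z - w‖ ^ α := by
    simpa using h _ hpos hsmall w hwΩ hwF (z - w) le_rfl (by simpa using hz)
  exact abs_sub_le_iff.mpr ⟨hzw, hwz⟩

lemma abs_sub_le_of_two_mul_norm_sub_lt (hΩ : IsOpen Ω)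
    (hbound : BoundaryOscillationBound Ω u c δ₀ α) (hint : InteriorIncrementBound Ω u c δ₀ α)
    (hc : 0 ≤ c) (hα : α ≤ 1) {z w : E} (hz : z ∈ closure Ω) (hw : w ∈ closure Ω)
    (hpos : 0 < ‖z - w‖) (hsmall : 2 * ‖z - w‖ < δ₀) :
    |u z - u w| ≤ 2 * c * ‖z - w‖ ^ α := by
  rcases le_or_gt (infDist z (frontier Ω)) ‖z - w‖ with hzF | hzF
  · exact hbound.abs_sub_le_of_infDist_le hc hα hz hw hpos hsmall hzF
  rcases le_or_gt (infDist w (frontier Ω)) ‖z - w‖ with hwF | hwF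
  · rw [abs_sub_comm, norm_sub_rev]
    rw [norm_sub_rev] at hpos hsmall hwF
    exact hbound.abs_sub_le_of_infDist_le hc hα hw hz hpos hsmall hwF
  calc |u z - u w| ≤ c * ‖z - w‖ ^ α :=
        hint.abs_sub_le hΩ hz hw hpos (by linarith) hzF hwF
    _ ≤ 2 * c * ‖z - w‖ ^ α := by gcongr; linarith

end HolderGluing

open HolderGluing in
theorem stmt_6_general (n : ℕ) (Ω : Set (EuclideanSpace ℂ (Fin n)))
    (hΩopen : IsOpen Ω)
    (u : EuclideanSpace ℂ (Fin n) → ℝ)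
    (M : ℝ) (hbd : ∀ z ∈ closure Ω, |u z| ≤ M)
    (c δ₀ α' : ℝ) (hc : 0 < c) (hδ₀0 : 0 < δ₀)
    (hα'0 : 0 < α') (hα'1 : α' ≤ 1)
    (hbound : ∀ δ : ℝ, 0 < δ → δ < δ₀ → ∀ z₁ ∈ closure Ω, ∀ z₂ ∈ closure Ω,
      Metric.infDist z₁ (frontier Ω) ≤ δ → Metric.infDist z₂ (frontier Ω) ≤ δ →
      ‖z₁ - z₂‖ ≤ δ → |u z₁ - u z₂| ≤ c * δ ^ α')
    (hint : ∀ δ : ℝ, 0 < δ → δ < δ₀ → ∀ z ∈ Ω, δ < Metric.infDist z (frontier Ω) →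
      ∀ ζ : EuclideanSpace ℂ (Fin n), ‖ζ‖ ≤ δ → z + ζ ∈ closure Ω →
      u (z + ζ) - u z ≤ c * δ ^ α') :
    ∃ C : ℝ, 0 < C ∧ ∀ z ∈ closure Ω, ∀ w ∈ closure Ω,
      |u z - u w| ≤ C * ‖z - w‖ ^ α' := by
  refine ⟨max (2 * c) (2 * M / (δ₀ / 2) ^ α'), lt_max_of_lt_left (by positivity), ?_⟩
  intro z hz w hw
  rcases (norm_nonneg (z - w)).eq_or_lt with hzw | hpos
  · obtain rfl := sub_eq_zero.mp (norm_eq_zero.mp hzw.symm)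
    simp [Real.zero_rpow hα'0.ne']
  rcases lt_or_ge (2 * ‖z - w‖) δ₀ with hsmall | hlarge
  · calc |u z - u w| ≤ 2 * c * ‖z - w‖ ^ α' :=
          abs_sub_le_of_two_mul_norm_sub_lt hΩopen hbound hint hc.le hα'1 hz hw hpos hsmall
      _ ≤ _ := by gcongr; exact le_max_left _ _
  · calc |u z - u w| ≤ 2 * M / (δ₀ / 2) ^ α' * ‖z - w‖ ^ α' :=
          abs_sub_le_of_abs_le_of_le_norm_sub (hbd z hz) (hbd w hw) (by positivity) hα'0.le
            (by linarith)
      _ ≤ _ := by gcongr; exact le_max_right _ _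

/-- Let `Ω ⊂ ℂⁿ` be a nonempty bounded open set and `u` bounded on
`closure Ω`.  Let `c > 0`, `0 < δ₀ < 1`, `0 < α' ≤ 1`, and suppose that for every
`0 < δ < δ₀`: (i) `|u z₁ − u z₂| ≤ c δ^{α'}` whenever `z₁, z₂ ∈ closure Ω` are within `δ`
of `∂Ω` and `‖z₁ − z₂‖ ≤ δ`; (ii) `u(z+ζ) − u(z) ≤ c δ^{α'}` whenever `z ∈ Ω` with
`dist(z,∂Ω) > δ`, `‖ζ‖ ≤ δ` and `z + ζ ∈ closure Ω`.  Then `u` is `α'`-Hölder continuous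
on `closure Ω`. -/
theorem stmt_6 (n : ℕ) (Ω : Set (EuclideanSpace ℂ (Fin n)))
    (hΩopen : IsOpen Ω) (hΩbdd : Bornology.IsBounded Ω) (hΩne : Ω.Nonempty)
    (u : EuclideanSpace ℂ (Fin n) → ℝ)
    (M : ℝ) (hbd : ∀ z ∈ closure Ω, |u z| ≤ M)
    (c δ₀ α' : ℝ) (hc : 0 < c) (hδ₀0 : 0 < δ₀) (hδ₀1 : δ₀ < 1)
    (hα'0 : 0 < α') (hα'1 : α' ≤ 1)
    (hbound : ∀ δ : ℝ, 0 < δ → δ < δ₀ → ∀ z₁ ∈ closure Ω, ∀ z₂ ∈ closure Ω,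
      Metric.infDist z₁ (frontier Ω) ≤ δ → Metric.infDist z₂ (frontier Ω) ≤ δ →
      ‖z₁ - z₂‖ ≤ δ → |u z₁ - u z₂| ≤ c * δ ^ α')
    (hint : ∀ δ : ℝ, 0 < δ → δ < δ₀ → ∀ z ∈ Ω, δ < Metric.infDist z (frontier Ω) →
      ∀ ζ : EuclideanSpace ℂ (Fin n), ‖ζ‖ ≤ δ → z + ζ ∈ closure Ω →
      u (z + ζ) - u z ≤ c * δ ^ α') :
    ∃ C : ℝ, 0 < C ∧ ∀ z ∈ closure Ω, ∀ w ∈ closure Ω,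
      |u z - u w| ≤ C * ‖z - w‖ ^ α' :=
  stmt_6_general n Ω hΩopen u M hbd c δ₀ α' hc hδ₀0 hα'0 hα'1 hbound hint
end

section
/- Let Ω ⊂ ℂ^n be a bounded open set, let 0 < ε ≤ 2 and C > 0, and let μ be a finite Borel measure on Ω with μ(B(z,r) ∩ Ω) ≤ C r^{2n−2+ε} for all z ∈ cl(Ω) and all 0 < r < 1. Let ν be a finite Borel measure on Ω, let 0 < δ < 1, and set Ω_δ := {z ∈ Ω : dist(z, ∂Ω) > δ}. Then ∫_{Ω_δ} [ δ^{−2n} ∫_0^δ r^{2n−1} ( ∫_0^r t^{1−2n} ν(B(z,t)) dt ) dr ] dμ(z) ≤ (C / (ε(2n+ε))) ν(Ω) δ^ε. -/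
open MeasureTheory

/-!
By Tonelli, `∫_{Ω_δ} ν(B(z,t)) dμ(z) = ∫ μ(B(w,t) ∩ Ω_δ) dν(w)`. For `t ≤ δ` the set
`B(w,t) ∩ Ω_δ` is empty unless `w ∈ Ω`, so the Hausdorff–Riesz condition bounds this by
`C t^{2n-2+ε} ν(Ω)`. Exchanging the order of integration once more in each of the two radial
integrals turns the left-hand side into `δ^{-2n} ∫_0^δ r^{2n-1} ∫_0^r t^{1-2n} C t^{2n-2+ε} ν(Ω)`,
which evaluates to the right-hand side.
-/

open Metric Set ENNReal

section Radial

variable {α : Type*} [MeasurableSpace α]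

theorem lintegral_Ioc_ofReal_rpow {p r : ℝ} (hp : -1 < p) (hr : 0 ≤ r) :
    ∫⁻ t in Ioc 0 r, ENNReal.ofReal (t ^ p) =
      ENNReal.ofReal ((p + 1)⁻¹) * ENNReal.ofReal (r ^ (p + 1)) := by
  have hint : IntegrableOn (fun t : ℝ => t ^ p) (Ioc 0 r) := by
    rw [← intervalIntegrable_iff_integrableOn_Ioc_of_le hr]
    exact intervalIntegral.intervalIntegrable_rpow' hp
  rw [← ofReal_integral_eq_lintegral_ofReal hint
      ((ae_restrict_iff' measurableSet_Ioc).2 (.of_forall fun t ht => Real.rpow_nonneg ht.1.le p)),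
    ← intervalIntegral.integral_of_le hr, integral_rpow (.inl hp),
    Real.zero_rpow (by linarith), sub_zero, div_eq_inv_mul,
    ENNReal.ofReal_mul (inv_nonneg.2 (by linarith))]

theorem Measurable.setLIntegral_Ioc {f : α × ℝ → ℝ≥0∞} (hf : Measurable f) (a : ℝ) :
    Measurable fun x : α × ℝ => ∫⁻ t in Ioc a x.2, f (x.1, t) := by
  simp_rw [← lintegral_indicator measurableSet_Ioc]
  refine Measurable.lintegral_prod_right'
    (f := {q : (α × ℝ) × ℝ | q.2 ∈ Ioc a q.1.2}.indicator fun q => f (q.1.1, q.2)) ?_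
  exact (hf.comp (measurable_fst.fst.prodMk measurable_snd)).indicator
    ((measurableSet_lt measurable_const measurable_snd).inter
      (measurableSet_le measurable_snd measurable_fst.snd))

theorem lintegral_setLIntegral_Ioc_rpow_mul_le {μ : Measure α} [SFinite μ]
    {f : α × ℝ → ℝ≥0∞} (hf : Measurable f) {p q r : ℝ} (hpq : -1 < p + q) (hr : 0 ≤ r)
    {K : ℝ≥0∞} (hK : ∀ t ∈ Ioc 0 r, ∫⁻ x, f (x, t) ∂μ ≤ K * ENNReal.ofReal (t ^ q)) :
    ∫⁻ x, ∫⁻ t in Ioc 0 r, ENNReal.ofReal (t ^ p) * f (x, t) ∂volume ∂μ ≤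
      K * ENNReal.ofReal ((p + q + 1)⁻¹) * ENNReal.ofReal (r ^ (p + q + 1)) := by
  have hpow (s : ℝ) : Measurable fun t : ℝ => ENNReal.ofReal (t ^ s) :=
    (measurable_id.pow_const s).ennreal_ofReal
  calc ∫⁻ x, ∫⁻ t in Ioc 0 r, ENNReal.ofReal (t ^ p) * f (x, t) ∂volume ∂μ
      = ∫⁻ t in Ioc 0 r, ENNReal.ofReal (t ^ p) * ∫⁻ x, f (x, t) ∂μ := by
        rw [lintegral_lintegral_swap ((hpow p).comp measurable_snd |>.mul hf).aemeasurable]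
        simp_rw [lintegral_const_mul' _ _ ofReal_ne_top]
    _ ≤ ∫⁻ t in Ioc 0 r, K * ENNReal.ofReal (t ^ (p + q)) := by
        refine setLIntegral_mono' measurableSet_Ioc fun t ht => ?_
        calc ENNReal.ofReal (t ^ p) * ∫⁻ x, f (x, t) ∂μ
            ≤ ENNReal.ofReal (t ^ p) * (K * ENNReal.ofReal (t ^ q)) := by gcongr; exact hK t ht
          _ = K * ENNReal.ofReal (t ^ (p + q)) := by
            rw [mul_left_comm, ← ENNReal.ofReal_mul (Real.rpow_nonneg ht.1.le p),
              ← Real.rpow_add ht.1]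
    _ = K * ENNReal.ofReal ((p + q + 1)⁻¹) * ENNReal.ofReal (r ^ (p + q + 1)) := by
        rw [lintegral_const_mul K (hpow _), lintegral_Ioc_ofReal_rpow hpq hr, mul_assoc]

theorem lintegral_nested_radial_integral_le {μ : Measure α} [SFinite μ] {f : α × ℝ → ℝ≥0∞}
    (hf : Measurable f) {d ε δ : ℝ} (hd : 0 ≤ d) (hε : 0 < ε) (hδ : 0 < δ) {K : ℝ≥0∞}
    (hK : ∀ t ∈ Ioc 0 δ, ∫⁻ x, f (x, t) ∂μ ≤ K * ENNReal.ofReal (t ^ (d - 2 + ε))) :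
    ∫⁻ x, ENNReal.ofReal (δ ^ (-d)) *
        ∫⁻ r in Ioc 0 δ, ENNReal.ofReal (r ^ (d - 1)) *
          ∫⁻ t in Ioc 0 r, ENNReal.ofReal (t ^ (1 - d)) * f (x, t) ∂volume ∂volume ∂μ ≤
      K * ENNReal.ofReal ((ε * (d + ε))⁻¹) * ENNReal.ofReal (δ ^ ε) := by
  have hinner : ∀ r ∈ Ioc 0 δ,
      ∫⁻ x, ∫⁻ t in Ioc 0 r, ENNReal.ofReal (t ^ (1 - d)) * f (x, t) ∂volume ∂μ ≤
        K * ENNReal.ofReal ε⁻¹ * ENNReal.ofReal (r ^ ε) := by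
    intro r hr
    have h := lintegral_setLIntegral_Ioc_rpow_mul_le hf (p := 1 - d) (by linarith) hr.1.le
      fun t ht => hK t ⟨ht.1, ht.2.trans hr.2⟩
    rwa [show 1 - d + (d - 2 + ε) + 1 = ε by ring] at h
  have hmeas : Measurable fun x : α × ℝ =>
      ∫⁻ t in Ioc 0 x.2, ENNReal.ofReal (t ^ (1 - d)) * f (x.1, t) :=
    Measurable.setLIntegral_Ioc (f := fun x => ENNReal.ofReal (x.2 ^ (1 - d)) * f x)
      (((measurable_id.pow_const _).ennreal_ofReal.comp measurable_snd).mul hf) 0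
  have houter := lintegral_setLIntegral_Ioc_rpow_mul_le hmeas (p := d - 1) (by linarith) hδ.le
    hinner
  rw [show d - 1 + ε + 1 = d + ε by ring] at houter
  have hconst : ENNReal.ofReal ε⁻¹ * ENNReal.ofReal (d + ε)⁻¹ =
      ENNReal.ofReal ((ε * (d + ε))⁻¹) := by
    rw [← ENNReal.ofReal_mul (inv_nonneg.2 hε.le), mul_inv]
  have hpow : ENNReal.ofReal (δ ^ (-d)) * ENNReal.ofReal (δ ^ (d + ε)) =
      ENNReal.ofReal (δ ^ ε) := by
    rw [← ENNReal.ofReal_mul (Real.rpow_nonneg hδ.le _), ← Real.rpow_add hδ, neg_add_cancel_left]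
  rw [lintegral_const_mul' _ _ ofReal_ne_top]
  calc _ ≤ ENNReal.ofReal (δ ^ (-d)) * (K * ENNReal.ofReal ε⁻¹ * ENNReal.ofReal (d + ε)⁻¹ *
        ENNReal.ofReal (δ ^ (d + ε))) := by gcongr
    _ = _ := by rw [← hpow, ← hconst]; ring

end Radial

section Balls

variable {E : Type*} [PseudoMetricSpace E] [MeasurableSpace E] [OpensMeasurableSpace E]
  [SecondCountableTopology E]

theorem measurable_measure_ball (ν : Measure E) [SFinite ν] :
    Measurable fun x : E × ℝ => ν (ball x.1 x.2) :=
  measurable_measure_prodMk_left (ν := ν) (s := {q : (E × ℝ) × E | dist q.2 q.1.1 < q.1.2})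
    (measurableSet_lt (measurable_snd.dist measurable_fst.fst) measurable_fst.snd)

theorem setLIntegral_measure_ball_eq (μ ν : Measure E) [SFinite μ] [SFinite ν] (S : Set E)
    (t : ℝ) : ∫⁻ z in S, ν (ball z t) ∂μ = ∫⁻ w, μ (ball w t ∩ S) ∂ν := by
  have hT : MeasurableSet {q : E × E | dist q.2 q.1 < t} :=
    measurableSet_lt (measurable_snd.dist measurable_fst) measurable_const
  have hslice (w : E) : (fun z => (z, w)) ⁻¹' {q : E × E | dist q.2 q.1 < t} = ball w t := by
    ext z; simp [dist_comm]
  calc ∫⁻ z in S, ν (ball z t) ∂μ = ((μ.restrict S).prod ν) {q | dist q.2 q.1 < t} :=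
        (Measure.prod_apply hT).symm
    _ = ∫⁻ w, μ (ball w t ∩ S) ∂ν := by
        simp_rw [Measure.prod_apply_symm hT, hslice, Measure.restrict_apply measurableSet_ball]

end Balls

section InnerParallelSet

variable {E : Type*} [NormedAddCommGroup E] [NormedSpace ℝ E]

theorem IsOpen.ball_infDist_frontier_subset {s : Set E} (hs : IsOpen s) {z : E} (hz : z ∈ s) :
    ball z (infDist z (frontier s)) ⊆ s := by
  rcases (ball z (infDist z (frontier s))).eq_empty_or_nonempty with h | h
  · simp [h]
  refine (convex_ball z _).isPreconnected.subset_of_closure_inter_subset hs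
    ⟨z, mem_ball_self (nonempty_ball.1 h), hz⟩ ?_
  rintro x ⟨hx_closure, hx_ball⟩
  by_contra hx
  have hx_frontier : x ∈ frontier s := ⟨hx_closure, by rwa [hs.interior_eq]⟩
  exact (mem_ball'.1 hx_ball).not_ge (infDist_le_dist_of_mem hx_frontier)

variable [MeasurableSpace E] [OpensMeasurableSpace E] [SecondCountableTopology E]

theorem setLIntegral_measure_ball_le_mul_measure {μ ν : Measure E} [SFinite μ] [SFinite ν]
    {Ω : Set E} (hΩ : IsOpen Ω) {δ t : ℝ} (ht : t ≤ δ) {K : ℝ≥0∞}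
    (hK : ∀ w ∈ Ω, μ (ball w t ∩ Ω) ≤ K) :
    ∫⁻ z in {z ∈ Ω | δ < infDist z (frontier Ω)}, ν (ball z t) ∂μ ≤ K * ν Ω := by
  rw [setLIntegral_measure_ball_eq]
  refine (lintegral_mono fun w => ?_).trans (lintegral_indicator_const_le Ω K)
  by_cases hw : w ∈ Ω
  · rw [indicator_of_mem hw]
    exact (measure_mono (inter_subset_inter_right _ fun z hz => hz.1)).trans (hK w hw)
  · suffices ball w t ∩ {z ∈ Ω | δ < infDist z (frontier Ω)} = ∅ by simp [this]
    refine eq_empty_iff_forall_notMem.2 fun z ⟨hzw, hz, hδ⟩ => hw ?_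
    exact hΩ.ball_infDist_frontier_subset hz
      (ball_subset_ball (ht.trans hδ.le) (mem_ball_comm.1 hzw))

end InnerParallelSet

theorem stmt_8_general (n : ℕ) (Ω : Set (EuclideanSpace ℂ (Fin n)))
    (hΩopen : IsOpen Ω)
    (ε C : ℝ) (hε0 : 0 < ε)
    (μ ν : Measure (EuclideanSpace ℂ (Fin n)))
    [IsFiniteMeasure μ] [IsFiniteMeasure ν]
    (hμ : ∀ z ∈ closure Ω, ∀ r : ℝ, 0 < r → r < 1 →
      μ (Metric.ball z r ∩ Ω) ≤ ENNReal.ofReal (C * r ^ (2 * (n : ℝ) - 2 + ε)))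
    (δ : ℝ) (hδ0 : 0 < δ) (hδ1 : δ < 1) :
    ∫⁻ z in {z ∈ Ω | δ < Metric.infDist z (frontier Ω)},
        ENNReal.ofReal (δ ^ (-(2 * (n : ℝ)))) *
          ∫⁻ r in Set.Ioc (0 : ℝ) δ,
            ENNReal.ofReal (r ^ (2 * (n : ℝ) - 1)) *
              ∫⁻ t in Set.Ioc (0 : ℝ) r,
                ENNReal.ofReal (t ^ (1 - 2 * (n : ℝ))) * ν (Metric.ball z t) ∂volume
            ∂volume ∂μ
      ≤ ENNReal.ofReal (C / (ε * (2 * (n : ℝ) + ε))) * ν Ω * ENNReal.ofReal (δ ^ ε) := by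
  set S := {z ∈ Ω | δ < infDist z (frontier Ω)}
  have hball : ∀ t ∈ Ioc 0 δ, ∫⁻ z in S, ν (ball z t) ∂μ ≤
      ENNReal.ofReal C * ν Ω * ENNReal.ofReal (t ^ (2 * (n : ℝ) - 2 + ε)) := by
    intro t ht
    rw [mul_right_comm]
    refine setLIntegral_measure_ball_le_mul_measure hΩopen ht.2 fun w hw => ?_
    rw [← ENNReal.ofReal_mul' (Real.rpow_nonneg ht.1.le _)]
    exact hμ w (subset_closure hw) t ht.1 (ht.2.trans_lt hδ1)
  refine (lintegral_nested_radial_integral_le (measurable_measure_ball ν) (by positivity) hε0 hδ0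
    hball).trans_eq ?_
  rw [div_eq_mul_inv, ENNReal.ofReal_mul' (by positivity)]
  ring

/-- Let `Ω ⊂ ℂⁿ` be a bounded open set, `0 < ε ≤ 2`, `C > 0`, `μ` a
finite Borel measure with `μ(B(z,r) ∩ Ω) ≤ C r^{2n−2+ε}` for all `z ∈ closure Ω` and
`0 < r < 1`, `ν` a finite Borel measure on `Ω`, `0 < δ < 1`, and
`Ω_δ = {z ∈ Ω : dist(z,∂Ω) > δ}`.  Then
`∫_{Ω_δ} [δ^{−2n} ∫_0^δ r^{2n−1} (∫_0^r t^{1−2n} ν(B(z,t)) dt) dr] dμ(z)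
  ≤ (C/(ε(2n+ε))) ν(Ω) δ^ε`. -/
theorem stmt_8 (n : ℕ) (hn : 0 < n) (Ω : Set (EuclideanSpace ℂ (Fin n)))
    (hΩopen : IsOpen Ω) (hΩbdd : Bornology.IsBounded Ω)
    (ε C : ℝ) (hε0 : 0 < ε) (hε2 : ε ≤ 2) (hC : 0 < C)
    (μ ν : Measure (EuclideanSpace ℂ (Fin n)))
    [IsFiniteMeasure μ] [IsFiniteMeasure ν]
    (hμ : ∀ z ∈ closure Ω, ∀ r : ℝ, 0 < r → r < 1 →
      μ (Metric.ball z r ∩ Ω) ≤ ENNReal.ofReal (C * r ^ (2 * (n : ℝ) - 2 + ε)))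
    (δ : ℝ) (hδ0 : 0 < δ) (hδ1 : δ < 1) :
    ∫⁻ z in {z ∈ Ω | δ < Metric.infDist z (frontier Ω)},
        ENNReal.ofReal (δ ^ (-(2 * (n : ℝ)))) *
          ∫⁻ r in Set.Ioc (0 : ℝ) δ,
            ENNReal.ofReal (r ^ (2 * (n : ℝ) - 1)) *
              ∫⁻ t in Set.Ioc (0 : ℝ) r,
                ENNReal.ofReal (t ^ (1 - 2 * (n : ℝ))) * ν (Metric.ball z t) ∂volume
            ∂volume ∂μ
      ≤ ENNReal.ofReal (C / (ε * (2 * (n : ℝ) + ε))) * ν Ω * ENNReal.ofReal (δ ^ ε) :=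
  stmt_8_general n Ω hΩopen ε C hε0 μ ν hμ δ hδ0 hδ1
end
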